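/- arXiv:1412.3530 — 6 statements merged into one kernel-verified Lean document; each statement's English description precedes it below -/
import Mathlib

section
/- Let 0 < p ≤ 1, let x ∈ ℝ^d, and let ψ be a Borel probability measure on ℝ^d with finite first moment whose barycenter is x (i.e. ∫ y dψ(y) = x) and with ψ ≠ δ_x. Then ∫ |x−y|^p dψ(y) + |z−x|^p > ∫ |y−z|^p dψ(y) for every z ∈ ℝ^d with z ≠ x. -/
/-!
The triangle inequality and subadditivity of `t ↦ t ^ p` give
`‖y - z‖ ^ p ≤ ‖x - y‖ ^ p + ‖z - x‖ ^ p` for every `y`, so if the integrals were equal the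
two sides would agree `ψ`-a.e. For `p < 1`, strict subadditivity then forces `y = x` a.e.
For `p = 1`, equality in the triangle inequality puts `y - x` on the ray spanned by `x - z`;
as `y - x` has mean zero, integrating its component along that ray gives
`∫ ‖y - x‖ dψ = 0`. Either way `ψ = δ_x`.
-/

open MeasureTheory Filter

namespace Real

lemma mul_rpow_sub_one_lt_rpow {a t p : ℝ} (ha : 0 < a) (hat : a < t) (hp : p < 1) :
    a * t ^ (p - 1) < a ^ p :=
  calc a * t ^ (p - 1) < a * a ^ (p - 1) :=
        mul_lt_mul_of_pos_left (rpow_lt_rpow_of_neg ha hat (by linarith)) ha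
    _ = a ^ p := by rw [rpow_sub_one ha.ne', mul_div_cancel₀ _ ha.ne']

lemma rpow_add_lt_add_rpow {a b p : ℝ} (ha : 0 < a) (hb : 0 < b) (hp : p < 1) :
    (a + b) ^ p < a ^ p + b ^ p := by
  have hab : 0 < a + b := add_pos ha hb
  calc (a + b) ^ p = a * (a + b) ^ (p - 1) + b * (a + b) ^ (p - 1) := by
        rw [← add_mul, rpow_sub_one hab.ne', mul_div_cancel₀ _ hab.ne']
    _ < a ^ p + b ^ p :=
        add_lt_add (mul_rpow_sub_one_lt_rpow ha (by linarith) hp)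
          (mul_rpow_sub_one_lt_rpow hb (by linarith) hp)

lemma rpow_le_one_add {t p : ℝ} (ht : 0 ≤ t) (hp0 : 0 ≤ p) (hp1 : p ≤ 1) :
    t ^ p ≤ 1 + t := by
  rcases le_total t 1 with h | h
  · linarith [rpow_le_one ht h hp0]
  · linarith [rpow_le_self_of_one_le h hp1]

end Real

lemma norm_sub_rpow_le {E : Type*} [SeminormedAddCommGroup E] (x y z : E) {p : ℝ}
    (hp0 : 0 ≤ p) (hp1 : p ≤ 1) : ‖y - z‖ ^ p ≤ ‖y - x‖ ^ p + ‖x - z‖ ^ p :=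
  (Real.rpow_le_rpow (norm_nonneg _) (norm_sub_le_norm_sub_add_norm_sub y x z) hp0).trans
    (Real.rpow_add_le_add_rpow (norm_nonneg _) (norm_nonneg _) hp0 hp1)

lemma norm_sub_rpow_lt {E : Type*} [NormedAddCommGroup E] {x y z : E} (hyx : y ≠ x)
    (hxz : x ≠ z) {p : ℝ} (hp0 : 0 ≤ p) (hp1 : p < 1) :
    ‖y - z‖ ^ p < ‖y - x‖ ^ p + ‖x - z‖ ^ p :=
  (Real.rpow_le_rpow (norm_nonneg _) (norm_sub_le_norm_sub_add_norm_sub y x z) hp0).trans_lt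
    (Real.rpow_add_lt_add_rpow (norm_pos_iff.2 (sub_ne_zero.2 hyx))
      (norm_pos_iff.2 (sub_ne_zero.2 hxz)) hp1)

lemma inner_eq_norm_mul_of_norm_sub_eq_add {F : Type*} [NormedAddCommGroup F]
    [InnerProductSpace ℝ F] {x y z : F} (h : ‖y - z‖ = ‖y - x‖ + ‖x - z‖) :
    inner ℝ (y - x) (x - z) = ‖y - x‖ * ‖x - z‖ :=
  inner_eq_norm_mul_iff_real.2 (norm_add_eq_iff_real.1 (by rwa [sub_add_sub_cancel]))

namespace MeasureTheory

variable {α : Type*} [MeasurableSpace α] {μ : Measure α}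

theorem Integrable.norm_rpow_of_le_one [IsFiniteMeasure μ] {E : Type*} [NormedAddCommGroup E]
    {f : α → E} (hf : Integrable f μ) {p : ℝ} (hp0 : 0 ≤ p) (hp1 : p ≤ 1) :
    Integrable (fun a => ‖f a‖ ^ p) μ :=
  ((integrable_const 1).add hf.norm).mono'
    (hf.1.norm.aemeasurable.pow_const p).aestronglyMeasurable
    (Eventually.of_forall fun a => by
      rw [Real.norm_of_nonneg (by positivity)]
      exact Real.rpow_le_one_add (norm_nonneg _) hp0 hp1)

theorem ae_eq_zero_of_integral_eq_zero_of_inner_eq_norm_mul {F : Type*} [NormedAddCommGroup F]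
    [InnerProductSpace ℝ F] [CompleteSpace F] {f : α → F} {v : F} (hf : Integrable f μ)
    (h0 : ∫ a, f a ∂μ = 0) (hv : v ≠ 0)
    (hray : ∀ᵐ a ∂μ, inner ℝ (f a) v = ‖f a‖ * ‖v‖) : f =ᵐ[μ] 0 := by
  have hint : ∫ a, ‖f a‖ * ‖v‖ ∂μ = 0 := by
    rw [← inner_zero_right v, ← h0, ← integral_inner hf]
    refine integral_congr_ae ?_
    filter_upwards [hray] with a ha
    rw [← ha, real_inner_comm]
  filter_upwards [(integral_eq_zero_iff_of_nonneg (fun a => by positivity)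
    (hf.norm.mul_const _)).1 hint] with a ha
  simpa [hv] using ha

theorem Measure.eq_dirac_of_ae_eq [IsProbabilityMeasure μ] {x : α} (h : ∀ᵐ y ∂μ, y = x) :
    μ = Measure.dirac x := by
  rw [← Measure.map_id' (μ := μ), Measure.map_congr h, Measure.map_const, measure_univ,
    one_smul]

end MeasureTheory

theorem ae_eq_of_ae_rpow_norm_sub_eq_add {E : Type*} [NormedAddCommGroup E]
    [InnerProductSpace ℝ E] [CompleteSpace E] [MeasurableSpace E] {μ : Measure E}
    [IsProbabilityMeasure μ] {p : ℝ} (hp0 : 0 ≤ p) (hp1 : p ≤ 1) {x z : E} (hxz : x ≠ z)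
    (hμ : Integrable (fun y => y) μ) (hbar : ∫ y, y ∂μ = x)
    (heq : ∀ᵐ y ∂μ, ‖y - z‖ ^ p = ‖y - x‖ ^ p + ‖x - z‖ ^ p) : ∀ᵐ y ∂μ, y = x := by
  rcases hp1.lt_or_eq with hp1 | rfl
  · filter_upwards [heq] with y hy
    by_contra hyx
    exact (norm_sub_rpow_lt hyx hxz hp0 hp1).ne hy
  · have hcentred : ∫ y, (y - x) ∂μ = 0 := by
      rw [integral_sub hμ (integrable_const x), hbar, integral_const]
      simp
    have hzero := ae_eq_zero_of_integral_eq_zero_of_inner_eq_norm_mul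
      (hμ.sub (integrable_const x)) hcentred (sub_ne_zero.2 hxz)
      (heq.mono fun y hy => inner_eq_norm_mul_of_norm_sub_eq_add (by simpa using hy))
    filter_upwards [hzero] with y hy using sub_eq_zero.1 hy

/-- If ψ is a probability measure with finite first moment, barycenter x, and ψ ≠ δ_x,
then the p-cost strict triangle inequality holds against any z ≠ x. -/
theorem stmt1 {d : ℕ} (p : ℝ) (hp0 : 0 < p) (hp1 : p ≤ 1)
    (x : EuclideanSpace ℝ (Fin d)) (ψ : Measure (EuclideanSpace ℝ (Fin d)))
    [IsProbabilityMeasure ψ]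
    (hmoment : Integrable (fun y => y) ψ)
    (hbar : (∫ y, y ∂ψ) = x)
    (hne : ψ ≠ Measure.dirac x)
    (z : EuclideanSpace ℝ (Fin d)) (hz : z ≠ x) :
    (∫ y, ‖y - z‖ ^ p ∂ψ) < (∫ y, ‖x - y‖ ^ p ∂ψ) + ‖z - x‖ ^ p := by
  have hbound : ∀ y, ‖y - z‖ ^ p ≤ ‖x - y‖ ^ p + ‖z - x‖ ^ p := fun y => by
    simpa only [norm_sub_rev y x, norm_sub_rev x z] using norm_sub_rpow_le x y z hp0.le hp1
  have hint_lhs : Integrable (fun y => ‖y - z‖ ^ p) ψ :=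
    (hmoment.sub (integrable_const z)).norm_rpow_of_le_one hp0.le hp1
  have hint_dist : Integrable (fun y => ‖x - y‖ ^ p) ψ :=
    ((integrable_const x).sub hmoment).norm_rpow_of_le_one hp0.le hp1
  have hint_rhs : Integrable (fun y => ‖x - y‖ ^ p + ‖z - x‖ ^ p) ψ :=
    hint_dist.add (integrable_const _)
  have hrhs :
      ∫ y, (‖x - y‖ ^ p + ‖z - x‖ ^ p) ∂ψ = (∫ y, ‖x - y‖ ^ p ∂ψ) + ‖z - x‖ ^ p := by
    rw [integral_add hint_dist (integrable_const _), integral_const]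
    simp
  rw [← hrhs]
  refine (integral_mono hint_lhs hint_rhs hbound).lt_of_ne fun heq => hne ?_
  refine Measure.eq_dirac_of_ae_eq
    (ae_eq_of_ae_rpow_norm_sub_eq_add hp0.le hp1 hz.symm hmoment hbar ?_)
  filter_upwards [(integral_eq_iff_of_ae_le hint_lhs hint_rhs (ae_of_all _ hbound)).1 heq]
    with y hy
  rw [hy, norm_sub_rev x y, norm_sub_rev z x]
end

section
/- Let 0 < p ≤ 1 and let y⁻ < y' < y⁺ be real numbers, with t ∈ (0,1) chosen so that t·y⁻ + (1−t)·y⁺ = y'. Define G(z) = t|z−y⁻|^p + (1−t)|z−y⁺|^p − |z−y'|^p. Then G is strictly increasing on the interval (y⁻, y'). -/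
/-!
On `(y⁻, y')` all three distances are nonzero, so `G` is differentiable there with
`G'(z) = p (t (z - y⁻)^(p-1) - (1 - t)(y⁺ - z)^(p-1) + (y' - z)^(p-1))`.
Since `p - 1 ≤ 0` and `y' - z < y⁺ - z`, the last power dominates `(y⁺ - z)^(p-1)`, and
`t (z - y⁻)^(p-1) > 0` makes `G'` strictly positive.
-/

open Set

lemma strictMonoOn_Ioo_of_hasDerivAt_pos {a b : ℝ} {f f' : ℝ → ℝ}
    (hf : ∀ x ∈ Ioo a b, HasDerivAt f (f' x) x) (hf' : ∀ x ∈ Ioo a b, 0 < f' x) :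
    StrictMonoOn f (Ioo a b) :=
  strictMonoOn_of_hasDerivWithinAt_pos (convex_Ioo a b)
    (fun x hx => (hf x hx).continuousAt.continuousWithinAt)
    (fun x hx => (hf x (interior_subset hx)).hasDerivWithinAt)
    (fun x hx => hf' x (interior_subset hx))

lemma hasDerivAt_abs_sub_rpow_of_lt {a x : ℝ} (p : ℝ) (h : a < x) :
    HasDerivAt (fun z => |z - a| ^ p) (p * (x - a) ^ (p - 1)) x := by
  have hpow : HasDerivAt (fun z => (z - a) ^ p) (p * (x - a) ^ (p - 1)) x := by
    simpa using ((hasDerivAt_id x).sub_const a).rpow_const (p := p) (Or.inl (sub_ne_zero.2 h.ne'))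
  refine hpow.congr_of_eventuallyEq ?_
  filter_upwards [eventually_gt_nhds h] with z hz
  rw [abs_of_pos (sub_pos.2 hz)]

lemma hasDerivAt_abs_sub_rpow_of_gt {a x : ℝ} (p : ℝ) (h : x < a) :
    HasDerivAt (fun z => |z - a| ^ p) (-(p * (a - x) ^ (p - 1))) x := by
  have hpow : HasDerivAt (fun z => (a - z) ^ p) (-(p * (a - x) ^ (p - 1))) x := by
    simpa using ((hasDerivAt_id x).const_sub a).rpow_const (p := p) (Or.inl (sub_ne_zero.2 h.ne'))
  refine hpow.congr_of_eventuallyEq ?_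
  filter_upwards [eventually_lt_nhds h] with z hz
  rw [abs_sub_comm, abs_of_pos (sub_pos.2 hz)]

theorem stmt2_general (p t ym yp y' : ℝ) (hp0 : 0 < p) (hp1 : p ≤ 1)
    (h2 : y' < yp) (ht : t ∈ Set.Ioo (0 : ℝ) 1) :
    StrictMonoOn
      (fun z => t * |z - ym| ^ p + (1 - t) * |z - yp| ^ p - |z - y'| ^ p)
      (Set.Ioo ym y') := by
  obtain ⟨ht0, -⟩ := ht
  refine strictMonoOn_Ioo_of_hasDerivAt_pos (fun x ⟨hxm, hxy⟩ =>
    (((hasDerivAt_abs_sub_rpow_of_lt p hxm).const_mul t).add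
      ((hasDerivAt_abs_sub_rpow_of_gt p (hxy.trans h2)).const_mul (1 - t))).sub
      (hasDerivAt_abs_sub_rpow_of_gt p hxy)) ?_
  rintro x ⟨hxm, hxy⟩
  have hm : 0 < (x - ym) ^ (p - 1) := Real.rpow_pos_of_pos (sub_pos.2 hxm) _
  have hp : 0 < (yp - x) ^ (p - 1) := Real.rpow_pos_of_pos (by linarith) _
  have hdom : (yp - x) ^ (p - 1) ≤ (y' - x) ^ (p - 1) :=
    Real.rpow_le_rpow_of_nonpos (sub_pos.2 hxy) (by linarith) (by linarith)
  have hpos : 0 < t * (x - ym) ^ (p - 1) - (1 - t) * (yp - x) ^ (p - 1) + (y' - x) ^ (p - 1) := by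
    linarith [mul_pos ht0 hm, mul_pos ht0 hp]
  linarith [mul_pos hp0 hpos]

/-- The function G(z) = t|z−y⁻|^p + (1−t)|z−y⁺|^p − |z−y'|^p is strictly increasing
on (y⁻, y'), where t·y⁻ + (1−t)·y⁺ = y' and 0 < p ≤ 1. -/
theorem stmt2 (p t ym yp y' : ℝ) (hp0 : 0 < p) (hp1 : p ≤ 1)
    (h1 : ym < y') (h2 : y' < yp) (ht : t ∈ Set.Ioo (0 : ℝ) 1)
    (hty : t * ym + (1 - t) * yp = y') :
    StrictMonoOn
      (fun z => t * |z - ym| ^ p + (1 - t) * |z - yp| ^ p - |z - y'| ^ p)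
      (Set.Ioo ym y') :=
  stmt2_general p t ym yp y' hp0 hp1 h2 ht
end

section
/- Let 0 < p ≤ 1, let y⁻ < y' < y⁺ be real numbers, let t ∈ (0,1) satisfy t·y⁻ + (1−t)·y⁺ = y', and suppose y⁻ < x' < x ≤ y'. Then t(x'−y⁻)^p + (1−t)(y⁺−x')^p + |y'−x|^p < t(x−y⁻)^p + (1−t)(y⁺−x)^p + |y'−x'|^p. -/
/-!
Both `b` and `c + d` lie between `c` and `b + d`, with complementary barycentric weights, so
concavity of `u ↦ u ^ p` (`p ≤ 1`) makes its increments over a fixed length antitone in the base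
point. Applied to the three costs involving `yp` and `y'`, this says that moving the source from
`x` to `x'` raises the cost towards `yp` by at most what it raises the cost towards `y'`; moving
the mass `t` that goes to `ym` from `x` to `x'` strictly lowers its cost since `p > 0`.
-/

theorem ConcaveOn.map_add_sub_map_le {𝕜 : Type*} [Field 𝕜] [LinearOrder 𝕜] [IsStrictOrderedRing 𝕜]
    {s : Set 𝕜} {f : 𝕜 → 𝕜} (hf : ConcaveOn 𝕜 s f) {b c d : 𝕜} (hc : c ∈ s) (hbd : b + d ∈ s)
    (hcb : c ≤ b) (hd : 0 ≤ d) : f (b + d) - f b ≤ f (c + d) - f c := by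
  rcases (add_nonneg (sub_nonneg.2 hcb) hd).eq_or_lt with hzero | hpos
  · obtain rfl : d = 0 := by linarith [sub_nonneg.2 hcb]
    simp
  set w := b - c + d
  have hw : w ≠ 0 := hpos.ne'
  have hlam : 0 ≤ d / w := div_nonneg hd hpos.le
  have hmu : 0 ≤ (b - c) / w := div_nonneg (sub_nonneg.2 hcb) hpos.le
  have hsum : d / w + (b - c) / w = 1 := by field_simp; ring
  have hb := hf.2 hc hbd hlam hmu hsum
  have hcd := hf.2 hc hbd hmu hlam (by rw [add_comm, hsum])
  simp only [smul_eq_mul] at hb hcd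
  have eb : d / w * c + (b - c) / w * (b + d) = b := by field_simp; ring
  have ecd : (b - c) / w * c + d / w * (b + d) = c + d := by field_simp; ring
  rw [eb] at hb
  rw [ecd] at hcd
  linear_combination hb + hcd - (f c + f (b + d)) * hsum

theorem stmt3_general (p t ym yp y' x x' : ℝ) (hp0 : 0 < p) (hp1 : p ≤ 1)
    (h2 : y' < yp) (ht : t ∈ Set.Ioo (0 : ℝ) 1)
    (hx1 : ym < x') (hx2 : x' < x) (hx3 : x ≤ y') :
    t * (x' - ym) ^ p + (1 - t) * (yp - x') ^ p + |y' - x| ^ p <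
      t * (x - ym) ^ p + (1 - t) * (yp - x) ^ p + |y' - x'| ^ p := by
  obtain ⟨ht0, ht1⟩ := ht
  rw [abs_of_nonneg (by linarith : 0 ≤ y' - x), abs_of_nonneg (by linarith : 0 ≤ y' - x')]
  have hym : (x' - ym) ^ p < (x - ym) ^ p := Real.rpow_lt_rpow (by linarith) (by linarith) hp0
  have hy' : (y' - x) ^ p ≤ (y' - x') ^ p :=
    Real.rpow_le_rpow (by linarith) (by linarith) hp0.le
  have hyp : (yp - x') ^ p - (yp - x) ^ p ≤ (y' - x') ^ p - (y' - x) ^ p := by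
    have := (Real.concaveOn_rpow hp0.le hp1).map_add_sub_map_le (b := yp - x) (c := y' - x)
      (d := x - x') (Set.mem_Ici.2 (by linarith)) (Set.mem_Ici.2 (by linarith)) (by linarith)
      (by linarith)
    simpa only [sub_add_sub_cancel] using this
  linarith [mul_lt_mul_of_pos_left hym ht0, mul_le_mul_of_nonneg_left hyp (sub_nonneg.2 ht1.le),
    mul_le_mul_of_nonneg_left hy' ht0.le]

/-- The key cost comparison: swapping the targets of the two source points x' < x
strictly decreases the total p-th power transport cost. -/
theorem stmt3 (p t ym yp y' x x' : ℝ) (hp0 : 0 < p) (hp1 : p ≤ 1)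
    (h1 : ym < y') (h2 : y' < yp) (ht : t ∈ Set.Ioo (0 : ℝ) 1)
    (hty : t * ym + (1 - t) * yp = y')
    (hx1 : ym < x') (hx2 : x' < x) (hx3 : x ≤ y') :
    t * (x' - ym) ^ p + (1 - t) * (yp - x') ^ p + |y' - x| ^ p <
      t * (x - ym) ^ p + (1 - t) * (yp - x) ^ p + |y' - x'| ^ p :=
  stmt3_general p t ym yp y' x x' hp0 hp1 h2 ht hx1 hx2 hx3
end

section
/- Let μ and ν be finite Borel measures on ℝ with equal total mass and equal first moments. Then μ ≤_c ν (i.e., ∫φ dμ ≤ ∫φ dν for every convex function φ: ℝ → ℝ) if and only if ∫(x−k)_+ dμ(x) ≤ ∫(x−k)_+ dν(x) for every real k. -/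
open MeasureTheory

/-!
Each call payoff `(x - k)₊` is convex, which gives one direction. Conversely, a finite maximum of
affine functions is an affine function plus a nonnegative combination of calls: add the lines in
order of increasing slope, so that each new line crosses the current maximum at most once and
contributes one new call at the crossing point. Equal masses and means together with ordered call
prices therefore order the integrals of such maxima. A convex `φ` is the increasing limit of the
maxima of its tangent lines at the first `n` rational points, and monotone convergence carries the
inequality over to `φ`.
-/

open Filter Finset Set Topology

/-- `σ` bounds the slope `b + ∑ cᵢ` of `f` at `+∞`. -/
def IsCallPortfolio (σ : ℝ) (f : ℝ → ℝ) : Prop :=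
  ∃ (a b : ℝ) (n : ℕ) (c k : Fin n → ℝ), (∀ i, 0 ≤ c i) ∧ b + ∑ i, c i ≤ σ ∧
    f = fun x => a + b * x + ∑ i, c i * max (x - k i) 0

lemma isCallPortfolio_affine (a : ℝ) {b σ : ℝ} (hb : b ≤ σ) :
    IsCallPortfolio σ fun x => a + b * x :=
  ⟨a, b, 0, Fin.elim0, Fin.elim0, fun i => i.elim0, by simpa using hb, by simp⟩

namespace IsCallPortfolio

variable {σ : ℝ} {f : ℝ → ℝ}

lemma mono (hf : IsCallPortfolio σ f) {σ' : ℝ} (hσ : σ ≤ σ') : IsCallPortfolio σ' f := by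
  obtain ⟨a, b, n, c, k, hc, hslope, hf⟩ := hf
  exact ⟨a, b, n, c, k, hc, hslope.trans hσ, hf⟩

lemma continuous (hf : IsCallPortfolio σ f) : Continuous f := by
  obtain ⟨a, b, n, c, k, -, -, rfl⟩ := hf
  fun_prop

lemma sub_le_mul_sub (hf : IsCallPortfolio σ f) {x y : ℝ} (hxy : x ≤ y) :
    f y - f x ≤ σ * (y - x) := by
  obtain ⟨a, b, n, c, k, hc, hslope, rfl⟩ := hf
  calc a + b * y + ∑ i, c i * max (y - k i) 0 - (a + b * x + ∑ i, c i * max (x - k i) 0)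
      = b * (y - x) + ∑ i, c i * (max (y - k i) 0 - max (x - k i) 0) := by
        simp only [mul_sub, Finset.sum_sub_distrib]; ring
    _ ≤ b * (y - x) + ∑ i, c i * (y - x) := by
        refine add_le_add_right (sum_le_sum fun i _ => mul_le_mul_of_nonneg_left ?_ (hc i)) _
        calc max (y - k i) 0 - max (x - k i) 0 ≤ max (y - k i - (x - k i)) (0 - 0) :=
            max_sub_max_le_max _ _ _ _
          _ = y - x := by simp [hxy]
    _ = (b + ∑ i, c i) * (y - x) := by rw [← Finset.sum_mul]; ring
    _ ≤ σ * (y - x) := by gcongr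

lemma monotone_affine_sub (hf : IsCallPortfolio σ f) (α : ℝ) {β : ℝ} (hσβ : σ ≤ β) :
    Monotone fun x => α + β * x - f x := fun x y hxy => by
  have := hf.sub_le_mul_sub hxy
  linarith [mul_le_mul_of_nonneg_right hσβ (sub_nonneg.2 hxy)]

/-- If the line `α + β x` crosses `f` at `t`, the maximum keeps the calls of `f` struck at or
below `t` and adds a call at `t` that raises the terminal slope to `β`. -/
lemma max_affine_of_eq (hf : IsCallPortfolio σ f) (α : ℝ) {β : ℝ} (hσβ : σ ≤ β) {t : ℝ}
    (ht : α + β * t = f t) : IsCallPortfolio β fun x => max (α + β * x) (f x) := by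
  have hd := hf.monotone_affine_sub α hσβ
  have hbelow : ∀ x ≤ t, α + β * x ≤ f x := fun x hxt => by linarith [hd hxt]
  have habove : ∀ x, t ≤ x → f x ≤ α + β * x := fun x htx => by linarith [hd htx]
  obtain ⟨a, b, n, c, k, hc, hslope, rfl⟩ := hf
  set c' : Fin n → ℝ := fun i => if k i ≤ t then c i else 0 with hc'_def
  have hc' : ∀ i, 0 ≤ c' i := fun i => by
    simp only [hc'_def]; split_ifs <;> simp [hc i]
  have hsum_c' : ∑ i, c' i ≤ ∑ i, c i := sum_le_sum fun i _ => by
    simp only [hc'_def]; split_ifs <;> simp [hc i]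
  have hcalls_le : ∀ x ≤ t, ∑ i, c' i * max (x - k i) 0 = ∑ i, c i * max (x - k i) 0 :=
    fun x hxt => sum_congr rfl fun i _ => by
      simp only [hc'_def]
      split_ifs with hk
      · rfl
      · rw [max_eq_right (by linarith [not_le.1 hk])]; simp
  have hcalls_ge : ∀ x, t ≤ x → ∑ i, c' i * max (x - k i) 0 =
      ∑ i, c' i * max (t - k i) 0 + (∑ i, c' i) * (x - t) := fun x htx => by
    rw [sum_mul, ← sum_add_distrib]
    refine sum_congr rfl fun i _ => ?_
    simp only [hc'_def]
    split_ifs with hk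
    · rw [max_eq_left (by linarith), max_eq_left (by linarith)]; ring
    · simp
  refine ⟨a, b, n + 1, Fin.cons (β - b - ∑ i, c' i) c', Fin.cons t k,
    Fin.cases (by simp; linarith) hc', by simp [Fin.sum_univ_succ], ?_⟩
  funext x
  simp only [Fin.sum_univ_succ, Fin.cons_zero, Fin.cons_succ]
  rcases le_total x t with hxt | htx
  · rw [max_eq_right (hbelow x hxt), max_eq_right (by linarith), hcalls_le x hxt]; ring
  · rw [max_eq_left (habove x htx), max_eq_left (by linarith), hcalls_ge x htx]
    linear_combination ht - hcalls_le t le_rfl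

lemma max_affine (hf : IsCallPortfolio σ f) (α : ℝ) {β : ℝ} (hσβ : σ ≤ β) :
    IsCallPortfolio β fun x => max (α + β * x) (f x) := by
  have hd := hf.monotone_affine_sub α hσβ
  have hfc := hf.continuous
  by_cases hf_le : ∀ x, α + β * x - f x ≤ 0
  · convert hf.mono hσβ using 1
    funext x
    exact max_eq_right (by linarith [hf_le x])
  by_cases hf_ge : ∀ x, 0 ≤ α + β * x - f x
  · convert isCallPortfolio_affine α (le_refl β) using 1
    funext x
    exact max_eq_left (by linarith [hf_ge x])
  simp only [not_forall, not_le] at hf_le hf_ge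
  obtain ⟨x₀, hx₀⟩ := hf_le
  obtain ⟨x₁, hx₁⟩ := hf_ge
  obtain ⟨t, -, ht⟩ := intermediate_value_Icc (hd.reflect_lt (hx₁.trans hx₀)).le
    (by fun_prop : Continuous fun x => α + β * x - f x).continuousOn
    (show (0 : ℝ) ∈ Set.Icc _ _ from ⟨hx₁.le, hx₀.le⟩)
  exact hf.max_affine_of_eq α hσβ (sub_eq_zero.1 ht)

end IsCallPortfolio

lemma isCallPortfolio_sup' {ι : Type*} (s : Finset ι) (hs : s.Nonempty) (A B : ι → ℝ) :
    IsCallPortfolio (s.sup' hs B) fun x => s.sup' hs fun i => A i + B i * x := by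
  classical
  induction s using Finset.induction_on_max_value B with
  | empty => exact absurd hs Finset.not_nonempty_empty
  | insert j s _ hmax ih =>
    rcases s.eq_empty_or_nonempty with rfl | hne
    · simpa using isCallPortfolio_affine (A j) (le_refl (B j))
    have hsup : (insert j s).sup' hs B = B j :=
      le_antisymm (sup'_le _ _ ((forall_mem_insert _ _ _).2 ⟨le_rfl, hmax⟩))
        (le_sup' B (mem_insert_self j s))
    rw [hsup]
    simpa only [sup'_insert hne] using
      (ih hne).max_affine (A j) (sup'_le _ _ hmax)

section Integral

variable {μ ν : Measure ℝ} [IsFiniteMeasure μ] [IsFiniteMeasure ν] {σ : ℝ} {f : ℝ → ℝ}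

lemma integrable_max_sub_zero (hμ : Integrable (fun x => x) μ) (k : ℝ) :
    Integrable (fun x => max (x - k) 0) μ :=
  (hμ.sub (integrable_const k)).pos_part

lemma IsCallPortfolio.integrable (hf : IsCallPortfolio σ f) (hμ : Integrable (fun x => x) μ) :
    Integrable f μ := by
  obtain ⟨a, b, n, c, k, -, -, rfl⟩ := hf
  exact ((integrable_const a).add (hμ.const_mul b)).add
    (integrable_finsetSum _ fun i _ => (integrable_max_sub_zero hμ (k i)).const_mul (c i))

lemma IsCallPortfolio.integral_le (hf : IsCallPortfolio σ f) (hmass : μ univ = ν univ)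
    (hμ : Integrable (fun x => x) μ) (hν : Integrable (fun x => x) ν)
    (hmom : ∫ x, x ∂μ = ∫ x, x ∂ν)
    (hcall : ∀ k : ℝ, ∫ x, max (x - k) 0 ∂μ ≤ ∫ x, max (x - k) 0 ∂ν) :
    ∫ x, f x ∂μ ≤ ∫ x, f x ∂ν := by
  obtain ⟨a, b, n, c, k, hc, -, rfl⟩ := hf
  have hint : ∀ (ρ : Measure ℝ) [IsFiniteMeasure ρ], Integrable (fun x => x) ρ →
      ∫ x, a + b * x + ∑ i, c i * max (x - k i) 0 ∂ρ =
        a * ρ.real univ + b * ∫ x, x ∂ρ + ∑ i, c i * ∫ x, max (x - k i) 0 ∂ρ := by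
    intro ρ _ hρ
    have hcalls := fun i => (integrable_max_sub_zero hρ (k i)).const_mul (c i)
    have haff : Integrable (fun x => a + b * x) ρ := (integrable_const a).add (hρ.const_mul b)
    have hsum : Integrable (fun x => ∑ i, c i * max (x - k i) 0) ρ :=
      integrable_finsetSum _ fun i _ => hcalls i
    rw [integral_add haff hsum, integral_add (integrable_const a) (hρ.const_mul b),
      integral_finsetSum _ fun i _ => hcalls i, integral_const_mul]
    simp [integral_const_mul, mul_comm]
  rw [hint μ hμ, hint ν hν, hmom, measureReal_def, measureReal_def, hmass]
  exact add_le_add_right (sum_le_sum fun i _ => mul_le_mul_of_nonneg_left (hcall (k i)) (hc i)) _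

end Integral

lemma integral_le_integral_of_monotone_tendsto {α : Type*} [MeasurableSpace α]
    {μ ν : Measure α} {f : ℕ → α → ℝ} {g : α → ℝ}
    (hfμ : ∀ n, Integrable (f n) μ) (hfν : ∀ n, Integrable (f n) ν)
    (hgμ : Integrable g μ) (hgν : Integrable g ν) (hmono : ∀ x, Monotone fun n => f n x)
    (hlim : ∀ x, Tendsto (fun n => f n x) atTop (𝓝 (g x)))
    (hle : ∀ n, ∫ x, f n x ∂μ ≤ ∫ x, f n x ∂ν) :
    ∫ x, g x ∂μ ≤ ∫ x, g x ∂ν :=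
  le_of_tendsto' (integral_tendsto_of_tendsto_of_monotone hfμ hgμ (ae_of_all _ hmono)
    (ae_of_all _ hlim)) fun n =>
      (hle n).trans (integral_mono (hfν n) hgν fun x => (hmono x).ge_of_tendsto (hlim x) n)

namespace ConvexOn

variable {φ : ℝ → ℝ}

lemma add_rightDeriv_mul_sub_le (hφ : ConvexOn ℝ univ φ) (x y : ℝ) :
    φ x + derivWithin φ (Ioi x) x * (y - x) ≤ φ y := by
  have hx : x ∈ interior univ := by simp
  rcases lt_trichotomy x y with hxy | rfl | hyx
  · have := hφ.rightDeriv_le_slope_of_mem_interior hx (mem_univ y) hxy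
    rw [slope_def_field, le_div_iff₀ (sub_pos.2 hxy)] at this
    linarith
  · simp
  · have := (hφ.slope_le_leftDeriv_of_mem_interior (mem_univ y) hx hyx).trans
      (hφ.leftDeriv_le_rightDeriv_of_mem_interior hx)
    rw [slope_def_field, div_le_iff₀ (sub_pos.2 hyx)] at this
    linarith

lemma monotone_rightDeriv (hφ : ConvexOn ℝ univ φ) :
    Monotone fun x => derivWithin φ (Ioi x) x := by
  simpa using hφ.monotoneOn_rightDeriv

/-- Approach `x` from the left through rationals: there the slopes of the tangents are bounded
below by the slope at `x - 1`, and `φ` is continuous. -/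
lemma le_of_forall_rat_tangent_le (hφ : ConvexOn ℝ univ φ) {x b : ℝ}
    (h : ∀ q : ℚ, φ q + derivWithin φ (Ioi (q : ℝ)) q * (x - q) ≤ b) : φ x ≤ b := by
  by_contra! hb
  set g : ℝ → ℝ := fun y => φ y + derivWithin φ (Ioi (x - 1)) (x - 1) * (x - y)
  have hg : Continuous g := by
    have := hφ.locallyLipschitz.continuous
    fun_prop
  have hnear : ∀ᶠ y in 𝓝[<] x, b < g y ∧ x - 1 < y :=
    nhdsWithin_le_nhds ((hg.continuousAt.eventually (lt_mem_nhds (by simpa [g] using hb))).and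
      (lt_mem_nhds (by linarith)))
  obtain ⟨l, hlx, hl⟩ := mem_nhdsLT_iff_exists_Ioo_subset.1 hnear
  obtain ⟨q, hlq, hqx⟩ := exists_rat_btwn (mem_Iio.1 hlx)
  obtain ⟨hbq, hq⟩ := hl ⟨hlq, hqx⟩
  have : g q ≤ φ q + derivWithin φ (Ioi (q : ℝ)) q * (x - q) :=
    add_le_add_right (mul_le_mul_of_nonneg_right (hφ.monotone_rightDeriv hq.le)
      (sub_nonneg.2 hqx.le)) _
  linarith [h q]

lemma exists_isCallPortfolio_tendsto (hφ : ConvexOn ℝ univ φ) :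
    ∃ f : ℕ → ℝ → ℝ, (∀ n, ∃ σ, IsCallPortfolio σ (f n)) ∧ (∀ x, Monotone fun n => f n x) ∧
      ∀ x, Tendsto (fun n => f n x) atTop (𝓝 (φ x)) := by
  obtain ⟨e, he⟩ := exists_surjective_nat ℚ
  set D : ℝ → ℝ := fun x => derivWithin φ (Ioi x) x
  set tangent : ℕ → ℝ → ℝ := fun i x => φ (e i) + D (e i) * (x - e i)
  have hmono : ∀ x, Monotone fun n => partialSups tangent n x :=
    fun x m n hmn => partialSups_monotone tangent hmn x
  refine ⟨partialSups tangent,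
    fun n => ⟨(range (n + 1)).sup' nonempty_range_add_one fun i => D (e i), ?_⟩, hmono,
    fun x => tendsto_atTop_isLUB (hmono x) ⟨?_, ?_⟩⟩
  · rw [partialSups_eq_sup'_range]
    convert isCallPortfolio_sup' (range (n + 1)) nonempty_range_add_one
      (fun i => φ (e i) - D (e i) * e i) (fun i => D (e i)) using 1
    funext x
    rw [Finset.sup'_apply]
    exact sup'_congr _ rfl fun i _ => by simp only [tangent]; ring
  · rintro _ ⟨n, rfl⟩
    exact partialSups_le tangent n φ (fun i _ y => hφ.add_rightDeriv_mul_sub_le (e i) y) x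
  · intro b hb
    refine hφ.le_of_forall_rat_tangent_le fun q => ?_
    obtain ⟨i, rfl⟩ := he q
    exact (le_partialSups tangent i x).trans (hb ⟨i, rfl⟩)

end ConvexOn

/-- Two finite measures on ℝ with equal mass and equal first moments are in convex
order iff their call prices ∫(x−k)₊ are ordered for all strikes k. -/
theorem stmt4 (μ ν : Measure ℝ) [IsFiniteMeasure μ] [IsFiniteMeasure ν]
    (hmass : μ Set.univ = ν Set.univ)
    (hμint : Integrable (fun x => x) μ) (hνint : Integrable (fun x => x) ν)
    (hmom : (∫ x, x ∂μ) = ∫ x, x ∂ν) :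
    (∀ φ : ℝ → ℝ, ConvexOn ℝ Set.univ φ → Integrable φ μ → Integrable φ ν →
        (∫ x, φ x ∂μ) ≤ ∫ x, φ x ∂ν) ↔
      (∀ k : ℝ, (∫ x, max (x - k) 0 ∂μ) ≤ ∫ x, max (x - k) 0 ∂ν) := by
  constructor
  · intro hconvex k
    exact hconvex _ (((convexOn_id convex_univ).sub (concaveOn_const k convex_univ)).sup
      (convexOn_const 0 convex_univ))
      (integrable_max_sub_zero hμint k) (integrable_max_sub_zero hνint k)
  · intro hcall φ hφ hφμ hφν
    obtain ⟨f, hf, hmono, hlim⟩ := hφ.exists_isCallPortfolio_tendsto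
    choose σ hσ using hf
    exact integral_le_integral_of_monotone_tendsto (fun n => (hσ n).integrable hμint)
      (fun n => (hσ n).integrable hνint) hφμ hφν hmono hlim
      fun n => (hσ n).integral_le hmass hμint hνint hmom hcall
end

section
/- Let μ, ν be Borel probability measures on ℝ^d in convex order with μ ∧ ν = 0 (mutually singular in the lattice sense), let 0 < p ≤ 1, and let π be a minimizer of ∫|x−y|^p dπ over all martingale transport plans in MT(μ,ν) with finite cost. Then π(Δ) = 0, where Δ = {(x,x) : x ∈ ℝ^d}. -/
open MeasureTheory ProbabilityTheory
open scoped ENNReal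

section Defs

variable {E : Type*} [NormedAddCommGroup E] [NormedSpace ℝ E]
  [MeasurableSpace E] [BorelSpace E]

/-- `π` is a martingale transport plan from `μ` to `ν`: a coupling whose disintegration
kernel `κ` satisfies the barycenter (martingale) condition `∫ y dκ_x(y) = x` for μ-a.e. x. -/
def IsMartingaleTransport (μ ν : Measure E) (π : Measure (E × E)) : Prop :=
  π.map Prod.fst = μ ∧ π.map Prod.snd = ν ∧
  ∃ κ : Kernel E E, IsMarkovKernel κ ∧ π = μ.compProd κ ∧
    ∀ᵐ x ∂μ, (∫ y, y ∂(κ x)) = x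

/-- Transport cost of `π` for the cost `c(x,y) = |x-y|^p`. -/
noncomputable def mcost (p : ℝ) (π : Measure (E × E)) : ℝ≥0∞ :=
  ∫⁻ z, ENNReal.ofReal (‖z.1 - z.2‖ ^ p) ∂π

/-- `π` minimizes the `p`-cost over all martingale transport plans in `MT(μ,ν)`. -/
def IsOptimalMT (p : ℝ) (μ ν : Measure E) (π : Measure (E × E)) : Prop :=
  IsMartingaleTransport μ ν π ∧
  ∀ π' : Measure (E × E), IsMartingaleTransport μ ν π' → mcost p π ≤ mcost p π'

/-- Convex order: `∫ φ dμ ≤ ∫ φ dν` for all convex `φ` (for which the integrals exist). -/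
def InConvexOrder (μ ν : Measure E) : Prop :=
  ∀ φ : E → ℝ, ConvexOn ℝ Set.univ φ → Integrable φ μ → Integrable φ ν →
    (∫ x, φ x ∂μ) ≤ ∫ x, φ x ∂ν

end Defs

namespace MeasureTheory.Measure

variable {α : Type*} [MeasurableSpace α] [MeasurableEq α]

lemma map_fst_restrict_diagonal_eq_map_snd (π : Measure (α × α)) :
    (π.restrict (Set.diagonal α)).map Prod.fst = (π.restrict (Set.diagonal α)).map Prod.snd :=
  map_congr <| (ae_restrict_mem measurableSet_diagonal).mono fun _ hz ↦ hz

lemma map_fst_restrict_diagonal_le_inf (π : Measure (α × α)) :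
    (π.restrict (Set.diagonal α)).map Prod.fst ≤ π.map Prod.fst ⊓ π.map Prod.snd := by
  refine le_inf (map_mono restrict_le_self measurable_fst) ?_
  rw [map_fst_restrict_diagonal_eq_map_snd]
  exact map_mono restrict_le_self measurable_snd

lemma measure_diagonal_eq_zero_of_inf_eq_zero (π : Measure (α × α))
    (h : π.map Prod.fst ⊓ π.map Prod.snd = 0) : π (Set.diagonal α) = 0 := by
  rw [← restrict_eq_zero, ← map_eq_zero_iff measurable_fst.aemeasurable]
  exact nonpos_iff_eq_zero'.mp (h ▸ map_fst_restrict_diagonal_le_inf π)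

end MeasureTheory.Measure

theorem stmt5_general {d : ℕ} (μ ν : Measure (EuclideanSpace ℝ (Fin d)))
    (hdisj : μ ⊓ ν = 0)
    (p : ℝ)
    (π : Measure (EuclideanSpace ℝ (Fin d) × EuclideanSpace ℝ (Fin d)))
    (hopt : IsOptimalMT p μ ν π) :
    π {z | z.1 = z.2} = 0 := by
  obtain ⟨⟨hfst, hsnd, -⟩, -⟩ := hopt
  exact π.measure_diagonal_eq_zero_of_inf_eq_zero (hfst ▸ hsnd ▸ hdisj)

/-- If μ and ν share no common mass, then any finite-cost optimal martingale transport
puts no mass on the diagonal. -/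
theorem stmt5 {d : ℕ} (μ ν : Measure (EuclideanSpace ℝ (Fin d)))
    [IsProbabilityMeasure μ] [IsProbabilityMeasure ν]
    (hco : InConvexOrder μ ν) (hdisj : μ ⊓ ν = 0)
    (p : ℝ) (hp0 : 0 < p) (hp1 : p ≤ 1)
    (π : Measure (EuclideanSpace ℝ (Fin d) × EuclideanSpace ℝ (Fin d)))
    (hopt : IsOptimalMT p μ ν π) (hfin : mcost p π < ⊤) :
    π {z | z.1 = z.2} = 0 :=
  stmt5_general μ ν hdisj p π hopt
end

section
/- Let f, g be radially symmetric probability densities on ℝ^d such that the measures μ = f dx and ν = g dx are in convex order (μ ≤_c ν). Define densities on ℝ by f₀(r) = f(r e)|r|^{d−1} and g₀(r) = g(r e)|r|^{d−1} for a fixed unit vector e (well-defined by radial symmetry), for −∞ < r < ∞. Then the one-dimensional measures f₀(r)dr and g₀(r)dr are in convex order on ℝ. -/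
/-!
Let `ψ(r) = φ(r) + φ(-r)` be the symmetrization of a convex `φ : ℝ → ℝ`. Since `f₀` and `g₀` are
even, `ψ` has twice the integrals of `φ`. Being even and convex, `ψ` is nondecreasing on `[0, ∞)`,
so `x ↦ ψ ‖x‖` is convex on `ℝ^d`. In polar coordinates, the image of `f dx` under the norm is
`C / 2` times the image of `f₀ dr` under the absolute value, where `C` is the area of the unit
sphere; hence `∫ ψ ‖x‖ f dx = C / 2 * ∫ ψ f₀ dr`, and the convex order passes from `ℝ^d` to `ℝ`.
-/

open MeasureTheory ProbabilityTheory
open scoped ENNReal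

open Set

theorem Function.Even.apply_abs {α β : Type*} [AddGroup α] [LinearOrder α] {ψ : α → β}
    (hψ : ψ.Even) (a : α) : ψ |a| = ψ a := by
  rcases abs_choice a with h | h <;> rw [h]
  exact hψ a

namespace MeasureTheory

-- The densities need not be measurable, so the integration formulas below hold for arbitrary
-- integrands; the lower bounds come from measurable minorants with the same integral.
theorem lintegral_comp_snd_prod {α β : Type*} [MeasurableSpace α] [MeasurableSpace β]
    (μ : Measure α) (ν : Measure β) [SFinite ν] (u : β → ℝ≥0∞) :
    ∫⁻ z, u z.2 ∂μ.prod ν = μ univ * ∫⁻ y, u y ∂ν := by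
  refine le_antisymm ((lintegral_prod_le _).trans_eq ?_) ?_
  · dsimp only
    rw [lintegral_const, mul_comm]
  · obtain ⟨u', hu'm, hu'le, hu'eq⟩ := exists_measurable_le_lintegral_eq ν u
    calc μ univ * ∫⁻ y, u y ∂ν = ∫⁻ z, u' z.2 ∂μ.prod ν := by
          rw [hu'eq, lintegral_prod (fun z => u' z.2) (hu'm.comp measurable_snd).aemeasurable]
          dsimp only
          rw [lintegral_const, mul_comm]
      _ ≤ _ := lintegral_mono fun z => hu'le z.2

theorem Measure.lintegral_volumeIoiPow (n : ℕ) (u : ℝ → ℝ≥0∞) :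
    ∫⁻ r : Ioi (0 : ℝ), u r ∂Measure.volumeIoiPow n
      = ∫⁻ r in Ioi (0 : ℝ), ENNReal.ofReal (r ^ n) * u r := by
  rw [Measure.volumeIoiPow, lintegral_withDensity_eq_lintegral_mul_non_measurable _
      (measurable_subtype_coe.pow_const _).ennreal_ofReal
      (.of_forall fun _ => ENNReal.ofReal_lt_top)]
  exact lintegral_subtype_comap measurableSet_Ioi fun r => ENNReal.ofReal (r ^ n) * u r

theorem lintegral_comp_abs (w : ℝ → ℝ≥0∞) :
    ∫⁻ r, w |r| = 2 * ∫⁻ r in Ioi (0 : ℝ), w r := by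
  have hIoi : ∫⁻ r in Ioi (0 : ℝ), w |r| = ∫⁻ r in Ioi (0 : ℝ), w r :=
    setLIntegral_congr_fun measurableSet_Ioi fun r hr => by rw [abs_of_pos hr]
  have hIio : ∫⁻ r in Iio (0 : ℝ), w |r| = ∫⁻ r in Ioi (0 : ℝ), w |r| := by
    simpa using (Measure.measurePreserving_neg (volume : Measure ℝ)).setLIntegral_comp_preimage_emb
      (MeasurableEquiv.neg ℝ).measurableEmbedding (fun r => w |r|) (Ioi 0)
  rw [← lintegral_add_compl _ measurableSet_Iio, compl_Iio, setLIntegral_congr Ioi_ae_eq_Ici.symm,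
    hIio, hIoi, two_mul]

theorem Measure.IsNegInvariant.withDensity {G : Type*} [MeasurableSpace G]
    [InvolutiveNeg G] [MeasurableNeg G] {μ : Measure G} [μ.IsNegInvariant] {g : G → ℝ≥0∞}
    (hg : g.Even) : (μ.withDensity g).IsNegInvariant := by
  refine ⟨Measure.ext fun s hs => ?_⟩
  rw [Measure.neg, Measure.map_apply measurable_neg hs, withDensity_apply _ hs,
    withDensity_apply _ (measurable_neg hs)]
  simpa [hg.eq] using (Measure.measurePreserving_neg μ).setLIntegral_comp_preimage_emb
    (MeasurableEquiv.neg G).measurableEmbedding g s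

section Polar

variable {E : Type*} [NormedAddCommGroup E] [NormedSpace ℝ E] [FiniteDimensional ℝ E]
  [MeasurableSpace E] [BorelSpace E] (μ : Measure E) [μ.IsAddHaarMeasure]

theorem lintegral_comp_norm [Nontrivial E] (u : ℝ → ℝ≥0∞) :
    ∫⁻ x, u ‖x‖ ∂μ = μ.toSphere univ *
      ∫⁻ r in Ioi (0 : ℝ), ENNReal.ofReal (r ^ (Module.finrank ℝ E - 1)) * u r := by
  calc ∫⁻ x, u ‖x‖ ∂μ = ∫⁻ x : ({0}ᶜ : Set E), u ‖(x : E)‖ ∂μ.comap (↑) := by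
        rw [lintegral_subtype_comap (measurableSet_singleton _).compl (fun x => u ‖x‖),
          restrict_compl_singleton]
    _ = ∫⁻ p, u p.2 ∂μ.toSphere.prod (.volumeIoiPow (Module.finrank ℝ E - 1)) := by
        simpa using (μ.measurePreserving_homeomorphUnitSphereProd.lintegral_comp_emb
          (Homeomorph.measurableEmbedding _) (fun p => u p.2))
    _ = _ := by
        rw [lintegral_comp_snd_prod _ _ (fun r : Ioi (0 : ℝ) => u r),
          Measure.lintegral_volumeIoiPow]

theorem map_norm_withDensity_comp_norm [Nontrivial E] (F : ℝ → ℝ≥0∞) :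
    (μ.withDensity fun x => F ‖x‖).map norm = (μ.toSphere univ / 2) •
      (volume.withDensity fun r => F |r| * ENNReal.ofReal (|r| ^ (Module.finrank ℝ E - 1))).map
        abs := by
  ext s hs
  have hnorm (x : E) : (norm ⁻¹' s).indicator (fun x => F ‖x‖) x = s.indicator F ‖x‖ :=
    indicator_comp_right norm
  have habs (r : ℝ) (n : ℕ) :
      (abs ⁻¹' s).indicator (fun r => F |r| * ENNReal.ofReal (|r| ^ n)) r =
        s.indicator (fun r => F r * ENNReal.ofReal (r ^ n)) |r| :=
    indicator_comp_right abs (g := fun r => F r * ENNReal.ofReal (r ^ n))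
  rw [Measure.smul_apply, Measure.map_apply measurable_norm hs,
    Measure.map_apply measurable_abs hs, withDensity_apply _ (measurable_norm hs),
    withDensity_apply _ (measurable_abs hs), ← lintegral_indicator (measurable_norm hs),
    ← lintegral_indicator (measurable_abs hs), lintegral_congr hnorm, lintegral_congr (habs · _),
    lintegral_comp_norm, lintegral_comp_abs, smul_eq_mul, ← mul_assoc,
    ENNReal.div_mul_cancel two_ne_zero ENNReal.ofNat_ne_top]
  simp only [indicator_mul_left, mul_comm]

theorem map_norm_withDensity_of_radial {f : E → ℝ} (hf : ∀ x y, ‖x‖ = ‖y‖ → f x = f y) {e : E}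
    (he : ‖e‖ = 1) :
    (μ.withDensity fun x => ENNReal.ofReal (f x)).map norm = (μ.toSphere univ / 2) •
      (volume.withDensity fun r : ℝ =>
        ENNReal.ofReal (f (r • e) * |r| ^ (Module.finrank ℝ E - 1))).map abs := by
  have : Nontrivial E := nontrivial_of_ne e 0 (ne_zero_of_norm_ne_zero (he ▸ one_ne_zero))
  have hE : (fun x => ENNReal.ofReal (f x)) = fun x => ENNReal.ofReal (f (‖x‖ • e)) :=
    funext fun x => by rw [hf x (‖x‖ • e) (by rw [norm_smul, he, mul_one, norm_norm])]
  have hℝ : (fun r : ℝ => ENNReal.ofReal (f (r • e) * |r| ^ (Module.finrank ℝ E - 1))) =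
      fun r => ENNReal.ofReal (f (|r| • e)) * ENNReal.ofReal (|r| ^ (Module.finrank ℝ E - 1)) :=
    funext fun r => by
      rw [ENNReal.ofReal_mul' (by positivity), hf (r • e) (|r| • e)
        (by rw [norm_smul, norm_smul, Real.norm_eq_abs, Real.norm_eq_abs, abs_abs])]
  rw [hE, hℝ]
  exact map_norm_withDensity_comp_norm μ fun r => ENNReal.ofReal (f (r • e))

end Polar

theorem isNegInvariant_withDensity_of_radial {E : Type*} [NormedAddCommGroup E]
    [NormedSpace ℝ E] {f : E → ℝ} (hf : ∀ x y, ‖x‖ = ‖y‖ → f x = f y) (e : E) (n : ℕ) :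
    (volume.withDensity fun r : ℝ => ENNReal.ofReal (f (r • e) * |r| ^ n)).IsNegInvariant :=
  Measure.IsNegInvariant.withDensity fun r => by
    rw [hf ((-r) • e) (r • e) (by rw [neg_smul, norm_neg]), abs_neg]

section RadialTransfer

variable {E : Type*} [NormedAddCommGroup E] [MeasurableSpace E] [OpensMeasurableSpace E]
  {μ : Measure E} {m : Measure ℝ} {c : ℝ≥0∞} {ψ : ℝ → ℝ}

theorem integrable_comp_norm_of_map_norm_eq (hc : c ≠ ∞) (hμ : μ.map norm = c • m.map abs)
    (hψc : Continuous ψ) (hψ : ψ.Even) (hm : Integrable ψ m) :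
    Integrable (fun x => ψ ‖x‖) μ := by
  have habs : Integrable ψ (m.map abs) := by
    rw [integrable_map_measure hψc.aestronglyMeasurable measurable_abs.aemeasurable]
    simpa only [Function.comp_def, hψ.apply_abs] using hm
  have := habs.smul_measure hc
  rwa [← hμ, integrable_map_measure hψc.aestronglyMeasurable measurable_norm.aemeasurable] at this

theorem integral_comp_norm_of_map_norm_eq (hμ : μ.map norm = c • m.map abs)
    (hψc : Continuous ψ) (hψ : ψ.Even) :
    ∫ x, ψ ‖x‖ ∂μ = c.toReal * ∫ r, ψ r ∂m := by
  rw [← integral_map measurable_norm.aemeasurable hψc.aestronglyMeasurable, hμ,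
    integral_smul_measure, integral_map measurable_abs.aemeasurable hψc.aestronglyMeasurable]
  simp only [hψ.apply_abs, smul_eq_mul]

end RadialTransfer

end MeasureTheory

theorem ConvexOn.add_comp_neg {E : Type*} [AddCommGroup E] [Module ℝ E] {φ : E → ℝ}
    (hφ : ConvexOn ℝ univ φ) : ConvexOn ℝ univ fun x => φ x + φ (-x) :=
  hφ.add (hφ.comp_linearMap (-LinearMap.id))

theorem ConvexOn.monotoneOn_of_even {ψ : ℝ → ℝ} (hψ : ConvexOn ℝ univ ψ) (heven : ψ.Even) :
    MonotoneOn ψ (Ici 0) := fun a ha b _ hab => by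
  have hmem : a ∈ segment ℝ (-b) b := by
    rw [segment_eq_Icc (by linarith [mem_Ici.mp ha])]
    exact ⟨by linarith [mem_Ici.mp ha], hab⟩
  simpa [heven b] using hψ.le_on_segment (mem_univ _) (mem_univ _) hmem

theorem ConvexOn.comp_norm {E : Type*} [SeminormedAddCommGroup E] [NormedSpace ℝ E]
    {ψ : ℝ → ℝ} (hψ : ConvexOn ℝ (Ici 0) ψ) (hmono : MonotoneOn ψ (Ici 0)) :
    ConvexOn ℝ univ fun x : E => ψ ‖x‖ := by
  refine ⟨convex_univ, fun x _ y _ a b ha hb hab => ?_⟩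
  calc ψ ‖a • x + b • y‖ ≤ ψ (a * ‖x‖ + b * ‖y‖) :=
        hmono (norm_nonneg _) (by positivity : 0 ≤ a * ‖x‖ + b * ‖y‖)
          ((convexOn_norm convex_univ).2 trivial trivial ha hb hab)
    _ ≤ a • ψ ‖x‖ + b • ψ ‖y‖ := hψ.2 (norm_nonneg x) (norm_nonneg y) ha hb hab

theorem InConvexOrder.of_map_norm_eq {E : Type*} [NormedAddCommGroup E] [NormedSpace ℝ E]
    [MeasurableSpace E] [BorelSpace E] {μ ν : Measure E} {m n : Measure ℝ} [m.IsNegInvariant]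
    [n.IsNegInvariant] {c : ℝ≥0∞} (hc0 : c ≠ 0) (hc : c ≠ ∞) (hμ : μ.map norm = c • m.map abs)
    (hν : ν.map norm = c • n.map abs) (h : InConvexOrder μ ν) : InConvexOrder m n := by
  intro φ hφ hφm hφn
  set ψ : ℝ → ℝ := fun r => φ r + φ (-r)
  have hψ : ConvexOn ℝ univ ψ := hφ.add_comp_neg
  have hψeven : ψ.Even := fun r => by simp only [ψ, neg_neg, add_comm]
  have hψc : Continuous ψ := continuousOn_univ.mp (hψ.continuousOn isOpen_univ)
  have hsymm (k : Measure ℝ) [k.IsNegInvariant] (hk : Integrable φ k) :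
      Integrable ψ k ∧ ∫ r, ψ r ∂k = 2 * ∫ r, φ r ∂k :=
    ⟨hk.add hk.comp_neg, by rw [integral_add hk hk.comp_neg, integral_neg_eq_self, two_mul]⟩
  have hΨ := h _ ((hψ.subset (subset_univ _) (convex_Ici 0)).comp_norm
      (hψ.monotoneOn_of_even hψeven))
    (integrable_comp_norm_of_map_norm_eq hc hμ hψc hψeven (hsymm m hφm).1)
    (integrable_comp_norm_of_map_norm_eq hc hν hψc hψeven (hsymm n hφn).1)
  rw [integral_comp_norm_of_map_norm_eq hμ hψc hψeven,
    integral_comp_norm_of_map_norm_eq hν hψc hψeven, (hsymm m hφm).2, (hsymm n hφn).2] at hΨ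
  linarith [le_of_mul_le_mul_left hΨ (ENNReal.toReal_pos hc0 hc)]

theorem stmt15_general {d : ℕ} (f g : EuclideanSpace ℝ (Fin d) → ℝ)
    (hfrad : ∀ x y, ‖x‖ = ‖y‖ → f x = f y)
    (hgrad : ∀ x y, ‖x‖ = ‖y‖ → g x = g y)
    (e : EuclideanSpace ℝ (Fin d)) (he : ‖e‖ = 1)
    (hco : InConvexOrder (volume.withDensity fun x => ENNReal.ofReal (f x))
      (volume.withDensity fun x => ENNReal.ofReal (g x))) :
    InConvexOrder
      (volume.withDensity fun r : ℝ => ENNReal.ofReal (f (r • e) * |r| ^ (d - 1)))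
      (volume.withDensity fun r : ℝ => ENNReal.ofReal (g (r • e) * |r| ^ (d - 1))) := by
  have : Nontrivial (EuclideanSpace ℝ (Fin d)) :=
    nontrivial_of_ne e 0 (ne_zero_of_norm_ne_zero (he ▸ one_ne_zero))
  have := isNegInvariant_withDensity_of_radial hfrad e (d - 1)
  have := isNegInvariant_withDensity_of_radial hgrad e (d - 1)
  have hC : (volume : Measure (EuclideanSpace ℝ (Fin d))).toSphere univ ≠ 0 :=
    Measure.measure_univ_ne_zero.mpr (Measure.toSphere_ne_zero _)
  refine InConvexOrder.of_map_norm_eq (ENNReal.div_ne_zero.mpr ⟨hC, ENNReal.ofNat_ne_top⟩)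
    (ENNReal.div_ne_top (measure_ne_top _ _) two_ne_zero) ?_ ?_ hco
  · simpa only [finrank_euclideanSpace_fin] using map_norm_withDensity_of_radial volume hfrad he
  · simpa only [finrank_euclideanSpace_fin] using map_norm_withDensity_of_radial volume hgrad he

/-- If radially symmetric densities f, g on ℝ^d give measures in convex order, then the
induced one-dimensional densities f₀(r) = f(r·e)|r|^{d−1}, g₀(r) = g(r·e)|r|^{d−1}
give measures in convex order on ℝ. -/
theorem stmt15 {d : ℕ} (hd : 1 ≤ d) (f g : EuclideanSpace ℝ (Fin d) → ℝ)
    (hf0 : ∀ x, 0 ≤ f x) (hg0 : ∀ x, 0 ≤ g x)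
    (hfrad : ∀ x y, ‖x‖ = ‖y‖ → f x = f y)
    (hgrad : ∀ x y, ‖x‖ = ‖y‖ → g x = g y)
    (e : EuclideanSpace ℝ (Fin d)) (he : ‖e‖ = 1)
    (hμ : IsProbabilityMeasure (volume.withDensity fun x => ENNReal.ofReal (f x)))
    (hν : IsProbabilityMeasure (volume.withDensity fun x => ENNReal.ofReal (g x)))
    (hco : InConvexOrder (volume.withDensity fun x => ENNReal.ofReal (f x))
      (volume.withDensity fun x => ENNReal.ofReal (g x))) :
    InConvexOrder
      (volume.withDensity fun r : ℝ => ENNReal.ofReal (f (r • e) * |r| ^ (d - 1)))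
      (volume.withDensity fun r : ℝ => ENNReal.ofReal (g (r • e) * |r| ^ (d - 1))) :=
  stmt15_general f g hfrad hgrad e he hco
end
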